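/- Positive variance of quadratic statistics when no coordinate is conditionally two-point distributed (general form of Lemma 2): Let d ≥ 1 and let X = (X_1, …, X_d) be a random vector in ℝ^d on a probability space (Ω, 𝓕, P) with E‖X‖⁴ < ∞. Let a_s (s = 1,…,d) and b_{sr} (s, r = 1,…,d) be real numbers with b_{mm} ≠ 0 for some fixed index m, and assume that there do NOT exist Borel measurable functions f, g : ℝ^d → ℝ with f(x) = f(y) and g(x) = g(y) whenever x_s = y_s for all s ≠ m, such that P( X_m = f(X) or X_m = g(X) ) = 1 (i.e. coordinate m of X is not conditionally two-point distributed). Then the random variable W = ∑_{s=1}^d a_s X_s + ∑_{s=1}^d ∑_{r=1}^d b_{sr} X_s X_r has strictly positive variance: Var(W) > 0. -/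

import Mathlib

/-!
If `Var W = 0`, then `W = c` almost surely; the fourth moment makes `W` square-integrable, so this
is a genuine consequence and not Mathlib's junk value `Var W = 0` for `W ∉ L²`. For fixed
coordinates `x_s`, `s ≠ m`, the statistic is a quadratic polynomial in `x_m` with leading
coefficient `b_mm ≠ 0`, so almost surely `X_m` is one of the two roots of `W = c` given by the
quadratic formula. These roots are measurable functions of the other coordinates, i.e. coordinate
`m` is conditionally two-point distributed.
-/

open MeasureTheory ProbabilityTheory Finset

noncomputable def quadraticRoot (ε a b c : ℝ) : ℝ :=
  (-b + ε * √(discrim a b c)) / (2 * a)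

lemma eq_quadraticRoot_of_quadratic_eq_zero {a b c x : ℝ} (ha : a ≠ 0)
    (h : a * (x * x) + b * x + c = 0) :
    x = quadraticRoot 1 a b c ∨ x = quadraticRoot (-1) a b c := by
  have hs : discrim a b c = √(discrim a b c) * √(discrim a b c) := by
    rw [Real.mul_self_sqrt (discrim_eq_sq_of_quadratic_eq_zero h ▸ sq_nonneg _)]
  simpa [quadraticRoot, ← sub_eq_add_neg] using (quadratic_eq_zero_iff ha hs x).1 h

lemma measurable_quadraticRoot (ε a : ℝ) :
    Measurable fun p : ℝ × ℝ => quadraticRoot ε a p.1 p.2 := by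
  unfold quadraticRoot discrim
  fun_prop

section QuadraticStatistic

variable {ι : Type*} [Fintype ι] (a : ι → ℝ) (b : ι → ι → ℝ)

def quadraticStatistic (x : ι → ℝ) : ℝ :=
  (∑ s, a s * x s) + ∑ s, ∑ r, b s r * x s * x r

variable [DecidableEq ι] (m : ι)

def linearCoeffAt (x : ι → ℝ) : ℝ :=
  a m + ∑ s ∈ univ.erase m, (b s m + b m s) * x s

def constCoeffAt (x : ι → ℝ) : ℝ :=
  (∑ s ∈ univ.erase m, a s * x s) + ∑ s ∈ univ.erase m, ∑ r ∈ univ.erase m, b s r * x s * x r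

lemma quadraticStatistic_eq_quadratic_in_coord (x : ι → ℝ) :
    quadraticStatistic a b x
      = b m m * (x m * x m) + linearCoeffAt a b m x * x m + constCoeffAt a b m x := by
  have split (f : ι → ℝ) : ∑ s, f s = f m + ∑ s ∈ univ.erase m, f s :=
    (add_sum_erase _ f (mem_univ m)).symm
  simp only [quadraticStatistic, linearCoeffAt, constCoeffAt]
  rw [split (fun s => a s * x s), split (fun s => ∑ r, b s r * x s * x r),
    split (fun r => b m r * x m * x r),
    sum_congr rfl fun s _ => split (fun r => b s r * x s * x r), sum_add_distrib, add_mul,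
    sum_mul]
  have cross : ∑ s ∈ univ.erase m, (b s m + b m s) * x s * x m
      = ∑ s ∈ univ.erase m, b s m * x s * x m + ∑ s ∈ univ.erase m, b m s * x m * x s := by
    rw [← sum_add_distrib]
    exact sum_congr rfl fun _ _ => by ring
  rw [cross]
  ring

lemma dependsOn_linearCoeffAt : DependsOn (linearCoeffAt a b m) {m}ᶜ := by
  intro x y h
  simp only [linearCoeffAt]
  exact congrArg _ <| sum_congr rfl fun s hs => by rw [h s (ne_of_mem_erase hs)]

lemma dependsOn_constCoeffAt : DependsOn (constCoeffAt a b m) {m}ᶜ := by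
  intro x y h
  have hxy {s} (hs : s ∈ univ.erase m) : x s = y s := h s (ne_of_mem_erase hs)
  simp only [constCoeffAt]
  congr 1
  · exact sum_congr rfl fun s hs => by rw [hxy hs]
  · exact sum_congr rfl fun s hs => sum_congr rfl fun r hr => by rw [hxy hs, hxy hr]

lemma measurable_linearCoeffAt : Measurable (linearCoeffAt a b m) := by
  unfold linearCoeffAt
  fun_prop

lemma measurable_constCoeffAt : Measurable (constCoeffAt a b m) := by
  unfold constCoeffAt
  fun_prop

lemma exists_roots_of_quadraticStatistic_eq (hbmm : b m m ≠ 0) (c : ℝ) :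
    ∃ f g : (ι → ℝ) → ℝ, Measurable f ∧ Measurable g ∧ DependsOn f {m}ᶜ ∧ DependsOn g {m}ᶜ ∧
      ∀ x, quadraticStatistic a b x = c → x m = f x ∨ x m = g x := by
  let root (ε : ℝ) (x : ι → ℝ) : ℝ :=
    quadraticRoot ε (b m m) (linearCoeffAt a b m x) (constCoeffAt a b m x - c)
  have measurable_root (ε : ℝ) : Measurable (root ε) :=
    (measurable_quadraticRoot ε _).comp <|
      (measurable_linearCoeffAt a b m).prodMk ((measurable_constCoeffAt a b m).sub_const c)
  have dependsOn_root (ε : ℝ) : DependsOn (root ε) {m}ᶜ := fun x y h => by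
    simp only [root, dependsOn_linearCoeffAt a b m h, dependsOn_constCoeffAt a b m h]
  refine ⟨root 1, root (-1), measurable_root 1, measurable_root (-1), dependsOn_root 1,
    dependsOn_root (-1), fun x hx => eq_quadraticRoot_of_quadratic_eq_zero hbmm ?_⟩
  rw [quadraticStatistic_eq_quadratic_in_coord a b m] at hx
  linarith

end QuadraticStatistic

instance : ENNReal.HolderTriple 4 4 2 where
  inv_add_inv_eq_inv := by
    rw [← two_mul, show (4 : ENNReal) = 2 * 2 by norm_num, ENNReal.mul_inv (by simp) (by simp),
      ← mul_assoc, ENNReal.mul_inv_cancel (by simp) (by simp), one_mul]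

lemma memLp_two_quadraticStatistic {Ω ι : Type*} [MeasurableSpace Ω] {P : Measure Ω}
    [IsFiniteMeasure P] [Fintype ι] {X : Ω → ι → ℝ} (hX : MemLp X 4 P)
    (a : ι → ℝ) (b : ι → ι → ℝ) :
    MemLp (fun ω => quadraticStatistic a b (X ω)) 2 P := by
  have coord (s : ι) : MemLp (fun ω => X ω s) 4 P := hX.eval s
  refine .add (memLp_finsetSum _ fun s _ => ?_) (memLp_finsetSum _ fun s _ =>
    memLp_finsetSum _ fun r _ => ?_)
  · exact ((coord s).mono_exponent (by norm_num)).const_mul (a s)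
  · simpa only [mul_assoc] using ((coord r).mul' (coord s)).const_mul (b s r)

theorem variance_pos_of_not_condTwoPoint
    (d : ℕ)
    {Ω : Type} [MeasurableSpace Ω] (P : Measure Ω) [IsProbabilityMeasure P]
    (X : Ω → Fin d → ℝ) (hX : Measurable X)
    (hmom : Integrable (fun ω => ‖X ω‖ ^ 4) P)
    (a : Fin d → ℝ) (b : Fin d → Fin d → ℝ)
    (m : Fin d) (hbmm : b m m ≠ 0)
    (htp : ¬ ∃ f g : (Fin d → ℝ) → ℝ, Measurable f ∧ Measurable g
      ∧ (∀ x y : Fin d → ℝ, (∀ s, s ≠ m → x s = y s) → f x = f y)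
      ∧ (∀ x y : Fin d → ℝ, (∀ s, s ≠ m → x s = y s) → g x = g y)
      ∧ P {ω | X ω m = f (X ω) ∨ X ω m = g (X ω)} = 1) :
    0 < variance (fun ω => (∑ s, a s * X ω s) + ∑ s, ∑ r, b s r * X ω s * X ω r) P := by
  set W : Ω → ℝ := fun ω => quadraticStatistic a b (X ω)
  have hX4 : MemLp X 4 P := by
    simpa using (integrable_norm_rpow_iff hX.aestronglyMeasurable (μ := P) (p := 4)
      (by norm_num) (by norm_num)).1 (by simpa using hmom)
  refine (variance_nonneg W P).lt_of_ne' fun hvar => htp ?_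
  have hconst : ∀ᵐ ω ∂P, W ω = P[W] :=
    ae_eq_integral_of_variance_eq_zero (memLp_two_quadraticStatistic hX4 a b) hvar
  obtain ⟨f, g, hf, hg, hf_dep, hg_dep, hroots⟩ :=
    exists_roots_of_quadraticStatistic_eq a b m hbmm P[W]
  refine ⟨f, g, hf, hg, fun _ _ h => hf_dep h, fun _ _ h => hg_dep h, ?_⟩
  rw [← measure_univ (μ := P)]
  exact measure_congr <| Filter.eventuallyEq_univ.mpr <| hconst.mono fun ω hω => hroots (X ω) hω
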